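/- arXiv:1611.01440 — 2 statements merged into one kernel-verified Lean document; each statement's English description precedes it below -/
import Mathlib

section
/- Let K \in \mathbb{N}, let p_0, \dots, p_K \ge 0 with \sum_{k=0}^K p_k = 1 and z := \sum_{k=0}^K k\, p_k > 0, let N, \lambda, \delta \in \mathbb{R}, and let \theta : [a,b] \to \mathbb{R} be continuous. Suppose x_0, \dots, x_K : [a,b] \to \mathbb{R} are differentiable and satisfy, for every k and every t \in [a,b], x_k'(t) = -\delta\, x_k(t) + \lambda\, k\, \frac{n(t)}{z} (\theta(t) - x_k(t)), where n(t) := \sum_{j=0}^K j\, p_j\, x_j(t). Then the aggregate X(t) := N \sum_{k=0}^K p_k\, x_k(t) satisfies X'(t) = -\delta\, X(t) + \lambda\, N\, n(t) \big( \theta(t) - \frac{n(t)}{z} \big) for all t \in [a,b]. -/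
open Finset

/-!
Differentiating `X = N ∑ p_k x_k` term by term and inserting the degree-resolved equations, the
infection term sums to `λ (n/z) (θ ∑ k p_k - ∑ k p_k x_k) = λ (n/z) (θ z - n)`: the mean degree
`z` cancels against the `1/z` of the mean-field closure, leaving `λ n (θ - n/z)`.
-/

theorem sum_weighted_sis_rhs_eq {ι : Type*} (s : Finset ι) (p d x : ι → ℝ) (δ lam θ z n : ℝ)
    (hz : z = ∑ k ∈ s, d k * p k) (hz0 : z ≠ 0) (hn : n = ∑ k ∈ s, d k * p k * x k) :
    ∑ k ∈ s, p k * (-δ * x k + lam * d k * (n / z) * (θ - x k)) =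
      -δ * ∑ k ∈ s, p k * x k + lam * n * (θ - n / z) := by
  have hsplit : ∑ k ∈ s, p k * (-δ * x k + lam * d k * (n / z) * (θ - x k)) =
      -δ * ∑ k ∈ s, p k * x k + lam * (n / z) * θ * ∑ k ∈ s, d k * p k -
        lam * (n / z) * ∑ k ∈ s, d k * p k * x k := by
    simp only [mul_sum, ← sum_add_distrib, ← sum_sub_distrib]
    exact sum_congr rfl fun k _ => by ring
  rw [hsplit, ← hz, ← hn]
  field_simp
  ring

theorem aggregate_trading_volume_ode_general (K : ℕ) (p : ℕ → ℝ)
    (z : ℝ) (hz : z = ∑ k ∈ Finset.range (K + 1), (k : ℝ) * p k) (hzpos : 0 < z)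
    (N lam δ a b : ℝ) (θ : ℝ → ℝ)
    (x : ℕ → ℝ → ℝ) (n : ℝ → ℝ)
    (hn : n = fun t => ∑ j ∈ Finset.range (K + 1), (j : ℝ) * p j * x j t)
    (hode : ∀ k ∈ Finset.range (K + 1), ∀ t ∈ Set.Icc a b,
      HasDerivAt (x k) (-δ * x k t + lam * (k : ℝ) * (n t / z) * (θ t - x k t)) t)
    (X : ℝ → ℝ) (hX : X = fun t => N * ∑ k ∈ Finset.range (K + 1), p k * x k t) :
    ∀ t ∈ Set.Icc a b,
      HasDerivAt X (-δ * X t + lam * N * n t * (θ t - n t / z)) t := by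
  intro t ht
  have hderiv : HasDerivAt X (N * ∑ k ∈ range (K + 1),
      p k * (-δ * x k t + lam * (k : ℝ) * (n t / z) * (θ t - x k t))) t := by
    rw [hX]
    exact (HasDerivAt.fun_sum fun k hk => (hode k hk t ht).const_mul (p k)).const_mul N
  convert hderiv using 1
  rw [sum_weighted_sis_rhs_eq _ p (fun k : ℕ => (k : ℝ)) (x · t) δ lam (θ t) z (n t) hz hzpos.ne'
    (by rw [hn]), hX]
  ring

/-- In the SIS-type network model, if each degree-resolved expected trading
volume `x_k` satisfies `x_k' = -δ x_k + λ k (n/z)(θ - x_k)` with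
`n(t) = ∑_j j p_j x_j(t)`, then the aggregate `X(t) = N ∑_k p_k x_k(t)` satisfies
`X' = -δ X + λ N n (θ - n/z)` on `[a,b]`. -/
theorem aggregate_trading_volume_ode (K : ℕ) (p : ℕ → ℝ)
    (hp : ∀ k ∈ Finset.range (K + 1), 0 ≤ p k)
    (hsum : ∑ k ∈ Finset.range (K + 1), p k = 1)
    (z : ℝ) (hz : z = ∑ k ∈ Finset.range (K + 1), (k : ℝ) * p k) (hzpos : 0 < z)
    (N lam δ a b : ℝ) (θ : ℝ → ℝ) (hθ : ContinuousOn θ (Set.Icc a b))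
    (x : ℕ → ℝ → ℝ) (n : ℝ → ℝ)
    (hn : n = fun t => ∑ j ∈ Finset.range (K + 1), (j : ℝ) * p j * x j t)
    (hode : ∀ k ∈ Finset.range (K + 1), ∀ t ∈ Set.Icc a b,
      HasDerivAt (x k) (-δ * x k t + lam * (k : ℝ) * (n t / z) * (θ t - x k t)) t)
    (X : ℝ → ℝ) (hX : X = fun t => N * ∑ k ∈ Finset.range (K + 1), p k * x k t) :
    ∀ t ∈ Set.Icc a b,
      HasDerivAt X (-δ * X t + lam * N * n t * (θ t - n t / z)) t :=
  aggregate_trading_volume_ode_general K p z hz hzpos N lam δ a b θ x n hn hode X hX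
end

section
/- Let a < T be real numbers, b > 0, \eta \ge 0, and let h : [a,T) \to (0,\infty) be continuous. Suppose f, g : [a,T) \to (0,\infty) are continuous and satisfy, for every s \in [a,T), f(s) = \frac{2}{b}(s + \eta)\, h(s)\, \exp\big(-b \int_a^s f(u)\,du\big) and g(s) = h(s)\, \exp\big(-b \int_a^s g(u)\,du\big). If \int_a^T g(s)^2\, ds < \infty, then \int_a^T f(s)^2\, ds < \infty. -/
open MeasureTheory

lemma exp_primitive_eq {a T b : ℝ} {φ ψ : ℝ → ℝ}
    (hφ : ContinuousOn φ (Set.Ico a T)) (hψ : ContinuousOn ψ (Set.Ico a T))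
    (heq : ∀ s ∈ Set.Ico a T, φ s = ψ s * Real.exp (-b * ∫ u in a..s, φ u)) :
    ∀ s ∈ Set.Ico a T,
      Real.exp (b * ∫ u in a..s, φ u) = 1 + b * ∫ u in a..s, ψ u := by
  intro s hs
  have has : a ≤ s := hs.1
  have hsub : Set.Icc a s ⊆ Set.Ico a T := fun x hx => ⟨hx.1, lt_of_le_of_lt hx.2 hs.2⟩
  set E : ℝ → ℝ := fun x =>
    Real.exp (b * ∫ u in a..x, φ u) - 1 - b * ∫ u in a..x, ψ u with hE
  have hφi : IntegrableOn φ (Set.uIcc a s) := by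
    rw [Set.uIcc_of_le has]
    exact (hφ.mono hsub).integrableOn_Icc
  have hψi : IntegrableOn ψ (Set.uIcc a s) := by
    rw [Set.uIcc_of_le has]
    exact (hψ.mono hsub).integrableOn_Icc
  have hΦc : ContinuousOn (fun x => ∫ u in a..x, φ u) (Set.Icc a s) := by
    have := intervalIntegral.continuousOn_primitive_interval hφi
    rwa [Set.uIcc_of_le has] at this
  have hΨc : ContinuousOn (fun x => ∫ u in a..x, ψ u) (Set.Icc a s) := by
    have := intervalIntegral.continuousOn_primitive_interval hψi
    rwa [Set.uIcc_of_le has] at this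
  have hEc : ContinuousOn E (Set.Icc a s) := by
    exact ((Real.continuous_exp.comp_continuousOn (continuousOn_const.mul hΦc)).sub
      continuousOn_const).sub (continuousOn_const.mul hΨc)
  have hderiv : ∀ x ∈ Set.Ico a s, HasDerivWithinAt E 0 (Set.Ici x) x := by
    intro x hx
    have hxT : x ∈ Set.Ico a T := ⟨hx.1, hx.2.trans hs.2⟩
    have hmemI : Set.Ioo x T ∈ nhdsWithin x (Set.Ioi x) :=
      Ioo_mem_nhdsGT (hx.2.trans hs.2)
    have hmem : Set.Ico a T ∈ nhdsWithin x (Set.Ioi x) :=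
      Filter.mem_of_superset hmemI (fun y hy => ⟨hxT.1.trans hy.1.le, hy.2⟩)
    have hms : StronglyMeasurableAtFilter φ (nhdsWithin x (Set.Ioi x)) :=
      ⟨Set.Ico a T, hmem, (hφ.aestronglyMeasurable measurableSet_Ico)⟩
    have hms' : StronglyMeasurableAtFilter ψ (nhdsWithin x (Set.Ioi x)) :=
      ⟨Set.Ico a T, hmem, (hψ.aestronglyMeasurable measurableSet_Ico)⟩
    have hsubx : Set.uIcc a x ⊆ Set.Ico a T := by
      rw [Set.uIcc_of_le hx.1]
      exact fun y hy => ⟨hy.1, lt_of_le_of_lt hy.2 (hx.2.trans_le hs.2.le)⟩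
    have hφint : IntervalIntegrable φ volume a x := (hφ.mono hsubx).intervalIntegrable
    have hψint : IntervalIntegrable ψ volume a x := (hψ.mono hsubx).intervalIntegrable
    have hφcw : ContinuousWithinAt φ (Set.Ioi x) x := (hφ x hxT).mono_of_mem_nhdsWithin hmem
    have hψcw : ContinuousWithinAt ψ (Set.Ioi x) x := (hψ x hxT).mono_of_mem_nhdsWithin hmem
    have hΦd : HasDerivWithinAt (fun u => ∫ t in a..u, φ t) (φ x) (Set.Ici x) x :=
      intervalIntegral.integral_hasDerivWithinAt_right hφint hms hφcw
    have hΨd : HasDerivWithinAt (fun u => ∫ t in a..u, ψ t) (ψ x) (Set.Ici x) x :=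
      intervalIntegral.integral_hasDerivWithinAt_right hψint hms' hψcw
    have hEd : HasDerivWithinAt E
        (Real.exp (b * ∫ u in a..x, φ u) * (b * φ x) - 0 - b * ψ x) (Set.Ici x) x := by
      exact (((hΦd.const_mul b).exp).sub (hasDerivWithinAt_const _ _ _)).sub
        (hΨd.const_mul b)
    have key : Real.exp (b * ∫ u in a..x, φ u) * (b * φ x) - 0 - b * ψ x = 0 := by
      have hφx := heq x hxT
      have hexp : Real.exp (b * ∫ u in a..x, φ u) *
          Real.exp (-b * ∫ u in a..x, φ u) = 1 := by
        rw [← Real.exp_add]; ring_nf; exact Real.exp_zero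
      have h2 : Real.exp (b * ∫ u in a..x, φ u) *
          (b * (ψ x * Real.exp (-b * ∫ u in a..x, φ u))) = b * ψ x := by
        calc Real.exp (b * ∫ u in a..x, φ u) *
            (b * (ψ x * Real.exp (-b * ∫ u in a..x, φ u)))
            = b * ψ x * (Real.exp (b * ∫ u in a..x, φ u) *
              Real.exp (-b * ∫ u in a..x, φ u)) := by ring
        _ = b * ψ x := by rw [hexp, mul_one]
      rw [hφx, h2]; ring
    rwa [key] at hEd
  have := constant_of_has_deriv_right_zero hEc hderiv s ⟨has, le_refl s⟩
  have hEa : E a = 0 := by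
    simp [hE, intervalIntegral.integral_same]
  rw [hEa, hE] at this
  simp only at this
  linarith

/-- Pathwise comparison argument (Wong--Heyde criterion): if positive
continuous `f, g` on `[a,T)` satisfy
`f(s) = (2/b)(s+η) h(s) exp(-b ∫_a^s f)` and `g(s) = h(s) exp(-b ∫_a^s g)`
with `h` positive continuous, `b > 0`, `η ≥ 0`, then square-integrability of `g` on `[a,T)`
implies square-integrability of `f` on `[a,T)`. -/
theorem comparison_nonexplosion (a T b η : ℝ) (haT : a < T) (hb : 0 < b) (hη : 0 ≤ η)
    (h f g : ℝ → ℝ)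
    (hh : ContinuousOn h (Set.Ico a T)) (hhpos : ∀ s ∈ Set.Ico a T, 0 < h s)
    (hf : ContinuousOn f (Set.Ico a T)) (hfpos : ∀ s ∈ Set.Ico a T, 0 < f s)
    (hg : ContinuousOn g (Set.Ico a T)) (hgpos : ∀ s ∈ Set.Ico a T, 0 < g s)
    (hfeq : ∀ s ∈ Set.Ico a T,
      f s = 2 / b * (s + η) * h s * Real.exp (-b * ∫ u in a..s, f u))
    (hgeq : ∀ s ∈ Set.Ico a T,
      g s = h s * Real.exp (-b * ∫ u in a..s, g u))
    (hg2 : IntegrableOn (fun s => g s ^ 2) (Set.Ico a T)) :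
    IntegrableOn (fun s => f s ^ 2) (Set.Ico a T) := by
  have haIco : a ∈ Set.Ico a T := ⟨le_refl a, haT⟩
  -- a + η > 0
  have haη : 0 < a + η := by
    have h1 := hfpos a haIco
    have h2 := hfeq a haIco
    have h3 := hhpos a haIco
    rw [intervalIntegral.integral_same] at h2
    simp at h2
    nlinarith [mul_pos (div_pos (by norm_num : (0:ℝ) < 2) hb) h3]
  set ε : ℝ := 2 * (a + η) with hεdef
  have hε : 0 < ε := by positivity
  set ψ : ℝ → ℝ := fun s => 2 / b * (s + η) * h s with hψdef
  have hψc : ContinuousOn ψ (Set.Ico a T) :=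
    (continuousOn_const.mul (continuousOn_id.add continuousOn_const)).mul hh
  have Eg := exp_primitive_eq hg hh hgeq
  have Ef := exp_primitive_eq hf hψc hfeq
  -- constant K
  set K0 : ℝ := max 1 (b / ε) with hK0def
  have hK01 : 1 ≤ K0 := le_max_left _ _
  have hK0b : b ≤ K0 * ε := by
    have := le_max_right 1 (b / ε)
    calc b = b / ε * ε := by field_simp
    _ ≤ K0 * ε := by nlinarith
  set K : ℝ := 2 / b * (T + η) * K0 with hKdef
  have hK : 0 < K := by
    have h1 : 0 < T + η := by linarith
    have h2 : 0 < 2 / b := by positivity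
    have h3 : 0 < K0 := lt_of_lt_of_le one_pos hK01
    rw [hKdef]
    exact mul_pos (mul_pos h2 h1) h3
  -- pointwise bound f ≤ K g
  have hbound : ∀ s ∈ Set.Ico a T, f s ≤ K * g s := by
    intro s hs
    have has : a ≤ s := hs.1
    have hsub : Set.Icc a s ⊆ Set.Ico a T := fun x hx => ⟨hx.1, lt_of_le_of_lt hx.2 hs.2⟩
    set Hs : ℝ := ∫ u in a..s, h u with hHs
    set Ps : ℝ := ∫ u in a..s, ψ u with hPs
    have hHnn : 0 ≤ Hs := by
      apply intervalIntegral.integral_nonneg has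
      intro u hu; exact (hhpos u (hsub hu)).le
    -- ε * Hs ≤ b * Ps
    have hPH : ε * Hs ≤ b * Ps := by
      have hsubu : Set.uIcc a s ⊆ Set.Ico a T := by
        rw [Set.uIcc_of_le has]; exact hsub
      have hhint : IntervalIntegrable h volume a s := (hh.mono hsubu).intervalIntegrable
      have hψint : IntervalIntegrable ψ volume a s := (hψc.mono hsubu).intervalIntegrable
      have hmono : ∫ u in a..s, (ε / b) * h u ≤ ∫ u in a..s, ψ u := by
        apply intervalIntegral.integral_mono_on has (hhint.const_mul _) hψint
        intro u hu
        have hhu := (hhpos u (hsub hu)).le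
        have : ε / b ≤ 2 / b * (u + η) := by
          rw [hεdef, div_le_iff₀ hb]
          have : a + η ≤ u + η := by linarith [hu.1]
          field_simp
          nlinarith
        simp only [hψdef]
        nlinarith
      rw [intervalIntegral.integral_const_mul] at hmono
      rw [hPs, hHs]
      calc ε * Hs = b * (ε / b * Hs) := by field_simp
      _ ≤ b * Ps := by nlinarith
    have hexpg := Eg s hs
    have hexpf := Ef s hs
    have hD1pos : (0:ℝ) < 1 + b * Hs := by rw [← hexpg]; exact Real.exp_pos _
    have hD2pos : (0:ℝ) < 1 + b * Ps := by rw [← hexpf]; exact Real.exp_pos _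
    -- g s * (1 + b Hs) = h s, f s * (1 + b Ps) = ψ s
    have hginv : g s * (1 + b * Hs) = h s := by
      rw [hgeq s hs, ← hexpg, mul_assoc, ← Real.exp_add]
      have hz : -b * (∫ u in a..s, g u) + b * ∫ u in a..s, g u = 0 := by ring
      rw [hz, Real.exp_zero, mul_one]
    have hfinv : f s * (1 + b * Ps) = ψ s := by
      rw [hfeq s hs, ← hexpf, mul_assoc, ← Real.exp_add]
      have hz : -b * (∫ u in a..s, f u) + b * ∫ u in a..s, f u = 0 := by ring
      rw [hz, Real.exp_zero, mul_one]
    -- ψ s ≤ 2/b (T+η) h s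
    have hψle : ψ s ≤ 2 / b * (T + η) * h s := by
      have hhs := (hhpos s hs).le
      have : s + η ≤ T + η := by linarith [hs.2]
      simp only [hψdef]
      have h2b : 0 ≤ 2 / b := by positivity
      exact mul_le_mul_of_nonneg_right (mul_le_mul_of_nonneg_left this h2b) hhs
    -- D1 ≤ K0 * D2
    have hD1D2 : 1 + b * Hs ≤ K0 * (1 + b * Ps) := by
      have : 1 + b * Hs ≤ K0 * (1 + ε * Hs) := by nlinarith
      have hεP : 1 + ε * Hs ≤ 1 + b * Ps := by linarith
      nlinarith [lt_of_lt_of_le hD1pos (le_refl (1 + b*Hs))]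
    -- conclude
    have hgpos' := hgpos s hs
    have hC : 0 < 2 / b * (T + η) := by
      have : 0 < T + η := by linarith
      positivity
    -- f s * (1+bPs) = ψ s ≤ C * h s = C * g s * (1+bHs) ≤ C * g s * K0 * (1+bPs)
    have step : f s * (1 + b * Ps) ≤ K * g s * (1 + b * Ps) := by
      calc f s * (1 + b * Ps) = ψ s := hfinv
      _ ≤ 2 / b * (T + η) * h s := hψle
      _ = 2 / b * (T + η) * (g s * (1 + b * Hs)) := by rw [hginv]
      _ ≤ 2 / b * (T + η) * (g s * (K0 * (1 + b * Ps))) := by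
          apply mul_le_mul_of_nonneg_left _ hC.le
          exact mul_le_mul_of_nonneg_left hD1D2 hgpos'.le
      _ = K * g s * (1 + b * Ps) := by rw [hKdef]; ring
    exact le_of_mul_le_mul_right step hD2pos
  -- conclude integrability by domination
  have hmeas : AEStronglyMeasurable (fun s => f s ^ 2) (volume.restrict (Set.Ico a T)) :=
    (hf.pow 2).aestronglyMeasurable measurableSet_Ico
  refine Integrable.mono (hg2.const_mul (K ^ 2)) hmeas ?_
  filter_upwards [ae_restrict_mem measurableSet_Ico] with s hs
  have h1 := hbound s hs
  have h2 := (hfpos s hs).le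
  have h3 := (hgpos s hs).le
  rw [Real.norm_eq_abs, Real.norm_eq_abs, abs_of_nonneg (by positivity),
    abs_of_nonneg (by positivity : (0:ℝ) ≤ K ^ 2 * g s ^ 2)]
  nlinarith
end
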